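/- Let α, β, ν, λ, μ, q, h, σ be real numbers with λ ≠ 0. Let t′, r′ be real numbers with r′ ≠ 0 and D := q + h·t′ + σ·r′ ≠ 0, and set r := λ·r′/D and t := μ·t′/D. Then r ≠ 0 and (α + β·t + ν·r)² / r² = (α·q + (α·h + β·μ)·t′ + (α·σ + ν·λ)·r′)² / (λ²·r′²). In particular there exist real numbers α′, β′, ν′ (namely α′ = α·q/λ, β′ = (α·h + β·μ)/λ, ν′ = (α·σ + ν·λ)/λ) such that (α + β·t + ν·r)²/r² = (α′ + β′·t′ + ν′·r′)²/r′². -/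

import Mathlib

/-! Clearing the common denominator `D = q + h·t′ + σ·r′` from both `α + β·t + ν·r` and `r`
turns the quotient into `(α·D + β·μ·t′ + ν·λ·r′)² / (λ·r′)²`; expanding `D` gives the
new linear form, and dividing it by `λ` moves the `λ²` out of the denominator. -/

section Collineation

variable {K : Type*} [Field K]

theorem add_mul_div_add_mul_div {D : K} (hD : D ≠ 0) (α β ν a b : K) :
    α + β * (a / D) + ν * (b / D) = (α * D + β * a + ν * b) / D := by
  field_simp

theorem div_sq_div_div_sq_div {D : K} (hD : D ≠ 0) (x y : K) :
    (x / D) ^ 2 / (y / D) ^ 2 = x ^ 2 / y ^ 2 := by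
  rw [div_pow, div_pow, div_div_div_cancel_right₀ (pow_ne_zero 2 hD)]

theorem newton_factor_collineation (α β ν lam μ q h σ t' r' : K)
    (hD : q + h * t' + σ * r' ≠ 0) :
    (α + β * (μ * t' / (q + h * t' + σ * r')) + ν * (lam * r' / (q + h * t' + σ * r'))) ^ 2
        / (lam * r' / (q + h * t' + σ * r')) ^ 2
      = (α * q + (α * h + β * μ) * t' + (α * σ + ν * lam) * r') ^ 2 / (lam ^ 2 * r' ^ 2) := by
  rw [add_mul_div_add_mul_div hD, div_sq_div_div_sq_div hD, mul_pow]
  ring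

end Collineation

/-- equivariance of the modified Newton law under central collineations.
With `r = λ·r′/D`, `t = μ·t′/D`, `D = q + h·t′ + σ·r′ ≠ 0`, `λ ≠ 0`, `r′ ≠ 0`, one has
`r ≠ 0` and `(α + β·t + ν·r)²/r² = (α′ + β′·t′ + ν′·r′)²/r′²` with
`α′ = α·q/λ`, `β′ = (α·h + β·μ)/λ`, `ν′ = (α·σ + ν·λ)/λ`. -/
theorem modified_newton_equivariance (α β ν lam μ q h σ t' r' : ℝ)
    (hlam : lam ≠ 0) (hr' : r' ≠ 0) (hD : q + h * t' + σ * r' ≠ 0)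
    (r t : ℝ) (hr : r = lam * r' / (q + h * t' + σ * r'))
    (ht : t = μ * t' / (q + h * t' + σ * r')) :
    r ≠ 0 ∧
    (α + β * t + ν * r) ^ 2 / r ^ 2
      = (α * q + (α * h + β * μ) * t' + (α * σ + ν * lam) * r') ^ 2 / (lam ^ 2 * r' ^ 2) ∧
    ∃ α' β' ν' : ℝ, α' = α * q / lam ∧ β' = (α * h + β * μ) / lam ∧
      ν' = (α * σ + ν * lam) / lam ∧
      (α + β * t + ν * r) ^ 2 / r ^ 2 = (α' + β' * t' + ν' * r') ^ 2 / r' ^ 2 := by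
  subst hr ht
  have key := newton_factor_collineation α β ν lam μ q h σ t' r' hD
  refine ⟨div_ne_zero (mul_ne_zero hlam hr') hD, key, _, _, _, rfl, rfl, rfl, key.trans ?_⟩
  ring
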